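/- arXiv:2005.13043 — 3 statements merged into one kernel-verified Lean document; each statement's English description precedes it below -/
import Mathlib

section
/- Let X = (p_1,…,p_k), k ≥ 1, be a list of pairwise non-proportional nonzero vectors in ℝ³. Then α̂(X) ≥ 1; moreover α̂(X) = 1 if and only if there exists a nonzero linear form λ ∈ ℝ[x,y,z] with λ(p_i) = 0 for every i (i.e., the corresponding points of P² are collinear), and if no such λ exists then α̂(X) ≥ 3/2. -/
open MvPolynomial

noncomputable section

/-- The polynomial ring `S = ℝ[x,y,z]`. -/
abbrev S3 : Type := MvPolynomial (Fin 3) ℝ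

/-- The linear form with coefficient vector `p`, i.e. `p 0 • x + p 1 • y + p 2 • z`;
`p` is the dual point of this linear form. -/
def linForm (p : Fin 3 → ℝ) : S3 := ∑ i, MvPolynomial.C (p i) * MvPolynomial.X i

/-- Iterated partial derivative along a list of coordinate directions, as a linear map. -/
def diffOp (L : List (Fin 3)) : S3 →ₗ[ℝ] S3 :=
  L.foldr (fun i f => (MvPolynomial.pderiv (R := ℝ) i).toLinearMap ∘ₗ f) LinearMap.id

/-- `F` vanishes to order `≥ s` at the point `p`: every iterated partial derivative of
total order at most `s - 1` vanishes at `p`. -/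
def VanishesToOrder (F : S3) (p : Fin 3 → ℝ) (s : ℕ) : Prop :=
  ∀ L : List (Fin 3), L.length < s → MvPolynomial.eval p (diffOp L F) = 0

/-- The subspace of polynomials vanishing to order `≥ s` at `p`. -/
def vanishSubmodule (p : Fin 3 → ℝ) (s : ℕ) : Submodule ℝ S3 :=
  ⨅ L ∈ {L : List (Fin 3) | L.length < s},
    LinearMap.ker ((MvPolynomial.aeval p).toLinearMap ∘ₗ diffOp L)

/-- Dimension of the degree-`d` graded piece of an ideal of `S`. -/
def idealDim (I : Ideal S3) (d : ℕ) : ℕ :=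
  Module.finrank ℝ
    ↥(I.restrictScalars ℝ ⊓ MvPolynomial.homogeneousSubmodule (Fin 3) ℝ d)

/-- Dimension of the space of degree-`d` homogeneous polynomials vanishing to order
`≥ m i` at each point `p i`. -/
def fatDim {k : ℕ} (p : Fin k → (Fin 3 → ℝ)) (m : Fin k → ℕ) (d : ℕ) : ℕ :=
  Module.finrank ℝ
    ↥(MvPolynomial.homogeneousSubmodule (Fin 3) ℝ d ⊓ ⨅ i, vanishSubmodule (p i) (m i))

/-- A list of vectors of `ℝ³` is pairwise non-proportional and nonzero. -/
def PairwiseNonProp {k : ℕ} (p : Fin k → (Fin 3 → ℝ)) : Prop :=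
  (∀ i, p i ≠ 0) ∧ ∀ i j, i ≠ j → ∀ c : ℝ, p j ≠ c • p i

/-- `α_s(X)`: least degree of a nonzero homogeneous polynomial vanishing to order `≥ s`
at every point of the list `X`. -/
def alphaDeg {k : ℕ} (p : Fin k → (Fin 3 → ℝ)) (s : ℕ) : ℕ :=
  sInf {d : ℕ | ∃ F : S3, F ≠ 0 ∧ F.IsHomogeneous d ∧ ∀ i, VanishesToOrder F (p i) s}

/-- The Waldschmidt constant `α̂(X) = inf { α_s(X)/s : s ≥ 1 }`. -/
def waldschmidt {k : ℕ} (p : Fin k → (Fin 3 → ℝ)) : ℝ :=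
  sInf {x : ℝ | ∃ s : ℕ, 1 ≤ s ∧ x = (alphaDeg p s : ℝ) / (s : ℝ)}

/-- Integer binomial coefficient `C(m, 2)`, zero for `m < 2`. -/
def choose2 (m : ℤ) : ℤ := if m < 2 then 0 else m * (m - 1) / 2

/-!
If a form `F` of degree `d` vanishes to order `s` at the coordinate point `e_t`, every monomial
`x^m` of `F` has `s + m_t ≤ d`: differentiating `x^m` away in the variables other than `x_t` and
evaluating at `e_t` isolates its coefficient. Three linearly independent points can be moved to
`e_0, e_1, e_2` by a linear change of coordinates, which preserves vanishing orders by the chain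
rule; summing the three bounds for one monomial gives `3s ≤ 2d`. Non-collinear points contain
such a triple, so `α̂ ≥ 3/2` for them. Differentiating a top-degree monomial away completely gives
`α_s ≥ s`, and for collinear points the power `λ^s` of the common linear form gives `α_1 = 1`.
-/

open scoped Matrix

lemma Finsupp.exists_lt_of_degree_le {σ : Type*} [Fintype σ] {m m' : σ →₀ ℕ} (hne : m' ≠ m)
    (hdeg : m'.degree ≤ m.degree) : ∃ j, m' j < m j := by
  by_contra! hle
  refine hne (Finsupp.ext fun j => le_antisymm ?_ (hle j))
  rw [Finsupp.degree_eq_sum, Finsupp.degree_eq_sum] at hdeg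
  exact ((Finset.sum_eq_sum_iff_of_le fun i _ => hle i).mp
    (le_antisymm (Finset.sum_le_sum fun i _ => hle i) hdeg) j (Finset.mem_univ j)).ge

lemma Finsupp.degree_erase_add {σ : Type*} (m : σ →₀ ℕ) (t : σ) :
    (m.erase t).degree + m t = m.degree := by
  conv_rhs => rw [← Finsupp.erase_add_single t m]
  rw [map_add, Finsupp.degree_single]

lemma Finsupp.eq_of_degree_eq_of_forall_ne {σ : Type*} {m m' : σ →₀ ℕ} (t : σ)
    (hagree : ∀ j ≠ t, m' j = m j) (hdeg : m'.degree = m.degree) : m' = m := by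
  have herase : m'.erase t = m.erase t := Finsupp.ext fun j => by
    rcases eq_or_ne j t with rfl | hj
    · simp
    · simp [Finsupp.erase_ne hj, hagree j hj]
  have ht : m' t = m t := by
    have h1 := Finsupp.degree_erase_add m t
    have h2 := Finsupp.degree_erase_add m' t
    rw [herase] at h2
    omega
  rw [← Finsupp.erase_add_single t m', ← Finsupp.erase_add_single t m, herase, ht]

lemma diffOp_cons (i : Fin 3) (L : List (Fin 3)) :
    diffOp (i :: L) = (pderiv i).toLinearMap ∘ₗ diffOp L := rfl

lemma diffOp_append (L₁ L₂ : List (Fin 3)) : diffOp (L₁ ++ L₂) = diffOp L₁ ∘ₗ diffOp L₂ := by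
  induction L₁ with
  | nil => rfl
  | cons i L ih => rw [List.cons_append, diffOp_cons, diffOp_cons, ih, LinearMap.comp_assoc]

lemma diffOp_concat_apply (L : List (Fin 3)) (i : Fin 3) (F : S3) :
    diffOp (L ++ [i]) F = diffOp L (pderiv i F) := by
  rw [diffOp_append]; rfl

lemma diffOp_monomial (L : List (Fin 3)) (m : Fin 3 →₀ ℕ) (c : ℝ) :
    diffOp L (monomial m c) =
      monomial (m - Multiset.toFinsupp ↑L) (c * ∏ j, ((m j).descFactorial (L.count j) : ℝ)) := by
  induction L with
  | nil => simp [diffOp]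
  | cons i L ih =>
    rw [diffOp_cons, LinearMap.comp_apply, ih, Derivation.coeFn_coe, pderiv_monomial]
    refine congrArg₂ (fun n a => monomial n a) ?_ ?_
    · ext j
      simp only [Finsupp.coe_tsub, Pi.sub_apply, Multiset.toFinsupp_apply, Multiset.coe_count,
        Finsupp.single_apply, List.count_cons, beq_iff_eq]
      split_ifs <;> omega
    · rw [mul_assoc, ← Finset.prod_erase_mul _ _ (Finset.mem_univ i),
        ← Finset.prod_erase_mul _ _ (Finset.mem_univ i), mul_assoc]
      congr 2
      · refine Finset.prod_congr rfl fun j hj => ?_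
        rw [List.count_cons_of_ne (Finset.ne_of_mem_erase hj).symm]
      · simp [List.count_cons_self, Nat.descFactorial_succ, Multiset.toFinsupp_apply, mul_comm]

lemma eval_diffOp (L : List (Fin 3)) (F : S3) (x : Fin 3 → ℝ) :
    eval x (diffOp L F) = ∑ m ∈ F.support,
      coeff m F * (∏ j, ((m j).descFactorial (L.count j) : ℝ)) * ∏ j, x j ^ (m j - L.count j) := by
  conv_lhs => rw [F.as_sum, map_sum, map_sum]
  refine Finset.sum_congr rfl fun m _ => ?_
  rw [diffOp_monomial, eval_monomial, Finsupp.prod_fintype _ _ fun j => pow_zero (x j)]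
  simp [Multiset.toFinsupp_apply]

section Vanishing

variable {F : S3} {p : Fin 3 → ℝ} {s d : ℕ}

lemma vanishesToOrder_iff_mem_vanishSubmodule :
    VanishesToOrder F p s ↔ F ∈ vanishSubmodule p s := by
  simp [VanishesToOrder, vanishSubmodule, Submodule.mem_iInf]

lemma vanishesToOrder_succ_iff :
    VanishesToOrder F p (s + 1) ↔ eval p F = 0 ∧ ∀ i, VanishesToOrder (pderiv i F) p s := by
  refine ⟨fun h => ⟨h [] (Nat.succ_pos s), fun i L hL => ?_⟩, fun ⟨h0, h⟩ L hL => ?_⟩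
  · simpa [diffOp_concat_apply] using h (L ++ [i]) (by simpa using hL)
  · rcases L.eq_nil_or_concat with rfl | ⟨L, i, rfl⟩
    · exact h0
    · simpa [diffOp_concat_apply] using h i L (by simpa using hL)

namespace VanishesToOrder

lemma of_zero : VanishesToOrder F p 0 := fun _ hL => absurd hL (by omega)

lemma mono {t : ℕ} (h : VanishesToOrder F p s) (hts : t ≤ s) : VanishesToOrder F p t :=
  fun L hL => h L (hL.trans_le hts)

lemma mul_left (h : VanishesToOrder F p s) (G : S3) : VanishesToOrder (G * F) p s := by
  induction s generalizing F G with
  | zero => exact of_zero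
  | succ s ih =>
    obtain ⟨h0, hd⟩ := vanishesToOrder_succ_iff.mp h
    refine vanishesToOrder_succ_iff.mpr ⟨by simp [h0], fun i => ?_⟩
    rw [pderiv_mul, vanishesToOrder_iff_mem_vanishSubmodule]
    exact add_mem (vanishesToOrder_iff_mem_vanishSubmodule.mp (ih (h.mono s.le_succ) _))
      (vanishesToOrder_iff_mem_vanishSubmodule.mp (ih (hd i) _))

lemma pow {l : S3} (hl : eval p l = 0) (s : ℕ) : VanishesToOrder (l ^ s) p s := by
  induction s with
  | zero => exact of_zero
  | succ s ih =>
    refine vanishesToOrder_succ_iff.mpr ⟨by simp [hl], fun i => ?_⟩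
    rw [pderiv_pow, Nat.add_sub_cancel, mul_right_comm]
    exact ih.mul_left _

lemma sum_support_eq_zero (h : VanishesToOrder F p s) (n : Fin 3 →₀ ℕ) (hn : n.degree < s) :
    ∑ m ∈ F.support,
      coeff m F * (∏ j, ((m j).descFactorial (n j) : ℝ)) * ∏ j, p j ^ (m j - n j) = 0 := by
  have hlen : n.toMultiset.toList.length < s := by
    rwa [Multiset.length_toList, Finsupp.card_toMultiset]
  have hcount (j : Fin 3) : n.toMultiset.toList.count j = n j := by
    rw [← Multiset.coe_count, Multiset.coe_toList, Finsupp.count_toMultiset]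
  simpa [eval_diffOp, hcount] using h _ hlen

lemma le_totalDegree (h : VanishesToOrder F p s) (hF : F ≠ 0) : s ≤ F.totalDegree := by
  obtain ⟨m, hm, hdeg⟩ := Finset.exists_mem_eq_sup F.support (support_nonempty.mpr hF)
    fun m => m.degree
  by_contra! hlt
  have key := h.sum_support_eq_zero m (by rwa [← hdeg])
  rw [Finset.sum_eq_single_of_mem m hm fun m' hm' hne => ?_] at key
  · simp [Finset.prod_eq_zero_iff, mem_support_iff.mp hm] at key
  · obtain ⟨j, hj⟩ := Finsupp.exists_lt_of_degree_le hne (hdeg ▸ MvPolynomial.le_totalDegree hm')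
    rw [Finset.prod_eq_zero (Finset.mem_univ j) (by simp [Nat.descFactorial_eq_zero_iff_lt.mpr hj])]
    simp

lemma add_apply_le_of_isHomogeneous {t : Fin 3} (hF : F.IsHomogeneous d)
    (h : VanishesToOrder F (Pi.single t 1) s) {m : Fin 3 →₀ ℕ} (hm : m ∈ F.support) :
    s + m t ≤ d := by
  have hdeg {m' : Fin 3 →₀ ℕ} (hm' : m' ∈ F.support) : m'.degree = d :=
    (hF.degree_eq_sum_deg_support hm').symm
  by_contra! hlt
  have key := h.sum_support_eq_zero (m.erase t)
    (by have := Finsupp.degree_erase_add m t; rw [hdeg hm] at this; omega)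
  rw [Finset.sum_eq_single_of_mem m hm fun m' hm' hne => ?_] at key
  · have hpow : ∏ j, (Pi.single t 1 : Fin 3 → ℝ) j ^ (m j - m.erase t j) = 1 :=
      Finset.prod_eq_one fun j _ => by
        rcases eq_or_ne j t with rfl | hj
        · simp
        · simp [Finsupp.erase_ne hj]
    have hfac : ∏ j, ((m j).descFactorial (m.erase t j) : ℝ) ≠ 0 :=
      Finset.prod_ne_zero_iff.mpr fun j _ => by
        rcases eq_or_ne j t with rfl | hj
        · simp
        · simp [Finsupp.erase_ne hj]
    rw [hpow, mul_one] at key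
    exact mul_ne_zero (mem_support_iff.mp hm) hfac key
  by_cases hagree : ∀ j ≠ t, m' j = m j
  · exact absurd (Finsupp.eq_of_degree_eq_of_forall_ne t hagree (by rw [hdeg hm', hdeg hm])) hne
  push Not at hagree
  obtain ⟨j, hjt, hj⟩ := hagree
  rcases hj.lt_or_gt with hlt | hgt
  · refine mul_eq_zero_of_left (mul_eq_zero_of_right _ ?_) _
    exact Finset.prod_eq_zero (Finset.mem_univ j)
      (by simp [Finsupp.erase_ne hjt, Nat.descFactorial_eq_zero_iff_lt.mpr hlt])
  · refine mul_eq_zero_of_right _ (Finset.prod_eq_zero (Finset.mem_univ j) ?_)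
    rw [Pi.single_eq_of_ne hjt, Finsupp.erase_ne hjt]
    exact zero_pow (Nat.sub_ne_zero_of_lt hgt)

end VanishesToOrder

end Vanishing

lemma three_mul_le_two_mul_of_vanishesToOrder_single {F : S3} {s d : ℕ} (hF : F ≠ 0)
    (hd : F.IsHomogeneous d) (h : ∀ t, VanishesToOrder F (Pi.single t 1) s) :
    3 * s ≤ 2 * d := by
  obtain ⟨m, hm⟩ := support_nonempty.mpr hF
  have hbound t := (h t).add_apply_le_of_isHomogeneous hd hm
  have hsum : m 0 + m 1 + m 2 = d := by
    rw [hd.degree_eq_sum_deg_support hm, ← Finsupp.degree_apply, Finsupp.degree_eq_sum,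
      Fin.sum_univ_three]
  linarith [hbound 0, hbound 1, hbound 2]

lemma eval_linForm (x q : Fin 3 → ℝ) : eval x (linForm q) = q ⬝ᵥ x := by
  simp [linForm, dotProduct]

lemma pderiv_linForm (q : Fin 3 → ℝ) (t : Fin 3) : pderiv t (linForm q) = C (q t) := by
  simp [linForm, pderiv_X, Pi.single_apply]

lemma linForm_isHomogeneous (q : Fin 3 → ℝ) : (linForm q).IsHomogeneous 1 :=
  IsHomogeneous.sum _ _ _ fun i _ => isHomogeneous_C_mul_X (q i) i

lemma linForm_ne_zero {q : Fin 3 → ℝ} (hq : q ≠ 0) : linForm q ≠ 0 := by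
  intro h
  apply hq
  funext j
  simpa [pderiv_linForm] using congrArg (pderiv j) h

def linSubst (M : Matrix (Fin 3) (Fin 3) ℝ) : S3 →ₐ[ℝ] S3 := aeval fun i => linForm (M i)

lemma linSubst_apply (M : Matrix (Fin 3) (Fin 3) ℝ) (F : S3) :
    linSubst M F = aeval (fun i => linForm (M i)) F := rfl

lemma linSubst_X (M : Matrix (Fin 3) (Fin 3) ℝ) (i : Fin 3) : linSubst M (X i) = linForm (M i) :=
  aeval_X _ i

lemma eval_linSubst (M : Matrix (Fin 3) (Fin 3) ℝ) (x : Fin 3 → ℝ) (F : S3) :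
    eval x (linSubst M F) = eval (M *ᵥ x) F := by
  have hC : (eval x).comp (algebraMap ℝ S3) = RingHom.id ℝ := RingHom.ext eval_C
  simp only [linSubst_apply, aeval_def, eval_eval₂, eval_linForm, hC]
  rfl

lemma linSubst_linForm (M : Matrix (Fin 3) (Fin 3) ℝ) (q : Fin 3 → ℝ) :
    linSubst M (linForm q) = linForm (q ᵥ* M) := by
  simp only [linForm, map_sum, map_mul, linSubst, aeval_C, aeval_X, Finset.mul_sum]
  rw [Finset.sum_comm]
  simp [Matrix.vecMul, dotProduct, Finset.sum_mul, mul_assoc]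

lemma linSubst_linSubst (M N : Matrix (Fin 3) (Fin 3) ℝ) (F : S3) :
    linSubst M (linSubst N F) = linSubst (N * M) F := by
  rw [linSubst_apply N, comp_aeval_apply]
  simp only [linSubst_linForm]
  rfl

lemma linSubst_one (F : S3) : linSubst 1 F = F := by
  have : (fun i => linForm ((1 : Matrix (Fin 3) (Fin 3) ℝ) i)) = X := by
    funext i
    simp [linForm, Matrix.one_apply]
  rw [linSubst, this, aeval_X_left_apply]

lemma linSubst_injective {M : Matrix (Fin 3) (Fin 3) ℝ} (hM : IsUnit M) :
    Function.Injective (linSubst M) :=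
  Function.LeftInverse.injective (g := linSubst M⁻¹) fun F => by
    rw [linSubst_linSubst, Matrix.mul_nonsing_inv M ((Matrix.isUnit_iff_isUnit_det M).mp hM),
      linSubst_one]

lemma MvPolynomial.IsHomogeneous.linSubst {F : S3} {d : ℕ} (hF : F.IsHomogeneous d)
    (M : Matrix (Fin 3) (Fin 3) ℝ) : (linSubst M F).IsHomogeneous d := by
  rw [linSubst_apply]
  simpa only [one_mul] using hF.aeval _ fun i => linForm_isHomogeneous (M i)

lemma pderiv_linSubst (M : Matrix (Fin 3) (Fin 3) ℝ) (t : Fin 3) (F : S3) :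
    pderiv t (linSubst M F) = linSubst M (∑ i, M i t • pderiv i F) := by
  induction F using MvPolynomial.induction_on with
  | C a => simp [linSubst]
  | add F G hF hG => simp only [map_add, hF, hG, Finset.sum_add_distrib, smul_add]
  | mul_X F j ih =>
    have hX : ∑ i, M i t • (F * pderiv i (X j)) = M j t • F := by
      simp [pderiv_X, Pi.single_apply]
    have hsum : ∑ i, M i t • pderiv i (F * X j) = (∑ i, M i t • pderiv i F) * X j + M j t • F := by
      simp only [pderiv_mul, smul_add, Finset.sum_add_distrib, hX, smul_mul_assoc, Finset.sum_mul]
    rw [hsum, map_mul, pderiv_mul, ih, map_add, map_mul, map_smul, linSubst_X, pderiv_linForm,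
      smul_eq_C_mul]
    ring

lemma VanishesToOrder.linSubst {F : S3} {M : Matrix (Fin 3) (Fin 3) ℝ} {x : Fin 3 → ℝ} {s : ℕ}
    (h : VanishesToOrder F (M *ᵥ x) s) : VanishesToOrder (linSubst M F) x s := by
  induction s generalizing F with
  | zero => exact .of_zero
  | succ s ih =>
    obtain ⟨h0, hd⟩ := vanishesToOrder_succ_iff.mp h
    refine vanishesToOrder_succ_iff.mpr ⟨by rw [eval_linSubst, h0], fun t => ?_⟩
    rw [pderiv_linSubst]
    refine ih (vanishesToOrder_iff_mem_vanishSubmodule.mpr ?_)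
    exact Submodule.sum_mem _ fun i _ =>
      Submodule.smul_mem _ _ (vanishesToOrder_iff_mem_vanishSubmodule.mp (hd i))

lemma three_mul_le_two_mul_of_linearIndependent {F : S3} {s d : ℕ} (hF : F ≠ 0)
    (hd : F.IsHomogeneous d) {A : Fin 3 → Fin 3 → ℝ} (hA : LinearIndependent ℝ A)
    (h : ∀ t, VanishesToOrder F (A t) s) : 3 * s ≤ 2 * d := by
  have hM : IsUnit (Matrix.of A)ᵀ :=
    (Matrix.isUnit_transpose _).mpr (Matrix.linearIndependent_rows_iff_isUnit.mp hA)
  refine three_mul_le_two_mul_of_vanishesToOrder_single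
    ((map_ne_zero_iff _ (linSubst_injective hM)).mpr hF) (hd.linSubst _) fun t => ?_
  exact VanishesToOrder.linSubst (by simpa [Matrix.mulVec_single_one] using h t)

lemma exists_linForm_of_span_ne_top {ι : Type*} (v : ι → Fin 3 → ℝ)
    (hv : Submodule.span ℝ (Set.range v) ≠ ⊤) :
    ∃ q : Fin 3 → ℝ, q ≠ 0 ∧ ∀ i, eval (v i) (linForm q) = 0 := by
  obtain ⟨f, hf, hfv⟩ := Submodule.exists_dual_map_eq_bot_of_lt_top hv.lt_top inferInstance
  refine ⟨fun j => f (Pi.single j 1), fun hq => hf ?_, fun i => ?_⟩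
  · exact (Pi.basisFun ℝ (Fin 3)).ext fun j => by simpa using congrFun hq j
  · have hfvi : f (v i) = 0 := by
      simpa [hfv] using Submodule.mem_map_of_mem (f := f)
        (Submodule.subset_span (Set.mem_range_self i) : v i ∈ Submodule.span ℝ (Set.range v))
    rw [eval_linForm, ← hfvi]
    conv_rhs => rw [← Finset.univ_sum_single (v i)]
    simp only [dotProduct, map_sum]
    refine Finset.sum_congr rfl fun j _ => ?_
    rw [mul_comm, ← smul_eq_mul, ← map_smul, ← Pi.single_smul', smul_eq_mul, mul_one]

lemma exists_linearIndependent_fin_of_span_eq_top {K V ι : Type*} [DivisionRing K]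
    [AddCommGroup V] [Module K V] [FiniteDimensional K V] {v : ι → V}
    (hv : Submodule.span K (Set.range v) = ⊤) {n : ℕ} (hn : Module.finrank K V = n) :
    ∃ A : Fin n → V, LinearIndependent K A ∧ ∀ t, A t ∈ Set.range v := by
  obtain ⟨f, hfv, -, hli⟩ := Submodule.exists_fun_fin_finrank_span_eq K (Set.range v)
  have hdim : Module.finrank K (Submodule.span K (Set.range v)) = n := by
    rw [hv, finrank_top, hn]
  exact ⟨f ∘ Fin.cast hdim.symm, hli.comp _ (Fin.cast_injective _), fun t => hfv _⟩

lemma exists_linForm_eval_eq_zero (w : Fin 3 → ℝ) :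
    ∃ q : Fin 3 → ℝ, q ≠ 0 ∧ eval w (linForm q) = 0 := by
  have hspan : Submodule.span ℝ (Set.range fun _ : Unit => w) ≠ ⊤ := fun h => by
    have := finrank_range_le_card (R := ℝ) fun _ : Unit => w
    rw [Set.finrank, h, finrank_top, Module.finrank_fin_fun] at this
    simp at this
  obtain ⟨q, hq, hqw⟩ := exists_linForm_of_span_ne_top _ hspan
  exact ⟨q, hq, hqw ()⟩

section Waldschmidt

variable {k : ℕ} (p : Fin k → (Fin 3 → ℝ))

lemma exists_isHomogeneous_alphaDeg (s : ℕ) :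
    ∃ F : S3, F ≠ 0 ∧ F.IsHomogeneous (alphaDeg p s) ∧ ∀ i, VanishesToOrder F (p i) s := by
  refine Nat.sInf_mem (s := {d | ∃ F : S3, F ≠ 0 ∧ F.IsHomogeneous d ∧
    ∀ i, VanishesToOrder F (p i) s}) ?_
  choose q hq hqp using fun i => exists_linForm_eval_eq_zero (p i)
  refine ⟨k * s, ∏ i, linForm (q i) ^ s, ?_, ?_, fun j => ?_⟩
  · exact Finset.prod_ne_zero_iff.mpr fun i _ => pow_ne_zero _ (linForm_ne_zero (hq i))
  · have := IsHomogeneous.prod Finset.univ _ (fun _ => s) fun i _ =>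
      by simpa using (linForm_isHomogeneous (q i)).pow s
    rwa [Finset.sum_const, Finset.card_univ, Fintype.card_fin, smul_eq_mul] at this
  · rw [← Finset.prod_erase_mul _ _ (Finset.mem_univ j)]
    exact (VanishesToOrder.pow (hqp j) s).mul_left _

lemma alphaDeg_le {F : S3} {d s : ℕ} (hF : F ≠ 0) (hd : F.IsHomogeneous d)
    (hv : ∀ i, VanishesToOrder F (p i) s) : alphaDeg p s ≤ d :=
  Nat.sInf_le ⟨F, hF, hd, hv⟩

lemma le_alphaDeg (hk : 0 < k) (s : ℕ) : s ≤ alphaDeg p s := by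
  obtain ⟨F, hF, hd, hv⟩ := exists_isHomogeneous_alphaDeg p s
  simpa [hd.totalDegree hF] using (hv ⟨0, hk⟩).le_totalDegree hF

lemma three_mul_le_two_mul_alphaDeg (hp : Submodule.span ℝ (Set.range p) = ⊤) (s : ℕ) :
    3 * s ≤ 2 * alphaDeg p s := by
  obtain ⟨A, hA, hAp⟩ := exists_linearIndependent_fin_of_span_eq_top hp (Module.finrank_fin_fun ℝ)
  obtain ⟨F, hF, hd, hv⟩ := exists_isHomogeneous_alphaDeg p s
  refine three_mul_le_two_mul_of_linearIndependent hF hd hA fun t => ?_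
  obtain ⟨i, hi⟩ := hAp t
  exact hi ▸ hv i

lemma le_waldschmidt {c : ℝ} (h : ∀ s, 1 ≤ s → c * s ≤ alphaDeg p s) : c ≤ waldschmidt p := by
  refine le_csInf ⟨_, 1, le_rfl, rfl⟩ ?_
  rintro _ ⟨s, hs, rfl⟩
  rw [le_div_iff₀ (by exact_mod_cast hs)]
  exact h s hs

lemma waldschmidt_le_alphaDeg_one : waldschmidt p ≤ alphaDeg p 1 :=
  csInf_le ⟨0, by rintro _ ⟨s, -, rfl⟩; positivity⟩ ⟨1, le_rfl, by simp⟩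

end Waldschmidt

theorem statement3_general {k : ℕ} (hk : 1 ≤ k) (p : Fin k → (Fin 3 → ℝ)) :
    1 ≤ waldschmidt p ∧
    (waldschmidt p = 1 ↔
      ∃ q : Fin 3 → ℝ, q ≠ 0 ∧ ∀ i, MvPolynomial.eval (p i) (linForm q) = 0) ∧
    ((¬ ∃ q : Fin 3 → ℝ, q ≠ 0 ∧ ∀ i, MvPolynomial.eval (p i) (linForm q) = 0) →
      (3 : ℝ) / 2 ≤ waldschmidt p) := by
  have one_le : 1 ≤ waldschmidt p := le_waldschmidt p fun s _ => by
    rw [one_mul]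
    exact_mod_cast le_alphaDeg p hk s
  have three_halves_le (hnc : ¬ ∃ q : Fin 3 → ℝ, q ≠ 0 ∧ ∀ i, eval (p i) (linForm q) = 0) :
      (3 : ℝ) / 2 ≤ waldschmidt p := by
    have hspan : Submodule.span ℝ (Set.range p) = ⊤ :=
      by_contra fun h => hnc (exists_linForm_of_span_ne_top p h)
    refine le_waldschmidt p fun s _ => ?_
    have : (3 * s : ℝ) ≤ 2 * alphaDeg p s := by
      exact_mod_cast three_mul_le_two_mul_alphaDeg p hspan s
    linarith
  refine ⟨one_le, ⟨fun h1 => ?_, fun ⟨q, hq, hpq⟩ => ?_⟩, three_halves_le⟩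
  · by_contra hnc
    linarith [three_halves_le hnc]
  · have : (alphaDeg p 1 : ℝ) ≤ 1 := by
      exact_mod_cast alphaDeg_le p (linForm_ne_zero hq) (linForm_isHomogeneous q)
        fun i => by simpa using VanishesToOrder.pow (hpq i) 1
    linarith [waldschmidt_le_alphaDeg_one p]

/-- Chudnovsky-type bounds: for distinct points `p 1, …, p k` of `P²`,
`α̂(X) ≥ 1`; `α̂(X) = 1` iff the points are collinear (there is a nonzero linear form
vanishing at all of them); and if they are not collinear then `α̂(X) ≥ 3/2`. -/
theorem statement3 {k : ℕ} (hk : 1 ≤ k) (p : Fin k → (Fin 3 → ℝ))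
    (hp : PairwiseNonProp p) :
    1 ≤ waldschmidt p ∧
    (waldschmidt p = 1 ↔
      ∃ q : Fin 3 → ℝ, q ≠ 0 ∧ ∀ i, MvPolynomial.eval (p i) (linForm q) = 0) ∧
    ((¬ ∃ q : Fin 3 → ℝ, q ≠ 0 ∧ ∀ i, MvPolynomial.eval (p i) (linForm q) = 0) →
      (3 : ℝ) / 2 ≤ waldschmidt p) :=
  statement3_general hk p

end
end

section
/- Let r ≥ 0, n ≥ 2 and d ≥ r be integers. Set t = min(n, r+2), q = ⌊t(r+1)/(t−1)⌋, a = t(r+1) − (t−1)q and b = t − 1 − a. Then t·C(d+1−r, 2) − a·C(d+1−q, 2) − b·C(d+2−q, 2) = C(d+2, 2) − C(r+2, 2) − Σ_{j=1}^{d−r} max(0, r + j + 1 − n·j). -/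
open MvPolynomial

noncomputable section

/-!
Both sides vanish at `d = r` and we compare their increments in `d`, using
`C(m+1, 2) = C(m, 2) + max(0, m)`. Writing `t(r+1) = (t-1)q + a` with `0 ≤ a < t-1`,
the left increment is `t(d+1-r) - a·max(0, d+1-q) - b·max(0, d+2-q)`, which a case split on
the position of `d` relative to `q` identifies with `d + 2 - max(0, d + 2 - t(d-r+1))`.
Replacing `t` by `n` in the last term changes nothing, since for `t = r+2 ≤ n` both versions
vanish.
-/

lemma choose2_of_le_one {m : ℤ} (h : m ≤ 1) : choose2 m = 0 := by
  rw [choose2, if_pos (by omega)]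

lemma choose2_add_one (m : ℤ) : choose2 (m + 1) = choose2 m + max 0 m := by
  rcases le_or_gt m 0 with h | h
  · rw [choose2_of_le_one (by omega), choose2_of_le_one (by omega), max_eq_left h, add_zero]
  obtain ⟨c, hc⟩ : Even ((m - 1) * m) := by simpa using Int.even_mul_succ_self (m - 1)
  rcases eq_or_lt_of_le (Int.add_one_le_of_lt h) with rfl | h1
  · decide
  rw [choose2, choose2, max_eq_right h.le, if_neg (by omega), if_neg (by omega),
    show m * (m - 1) = 2 * c by linarith, show (m + 1) * (m + 1 - 1) = 2 * (c + m) by linarith,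
    Int.mul_ediv_cancel_left _ two_ne_zero, Int.mul_ediv_cancel_left _ two_ne_zero]

lemma le_mul_add_one_div_sub_one {r t : ℕ} (ht : 2 ≤ t) (htr : t ≤ r + 2) :
    r + 2 ≤ t * (r + 1) / (t - 1) := by
  rw [Nat.le_div_iff_mul_le (by omega)]
  obtain ⟨s, rfl⟩ : ∃ s, t = s + 1 := ⟨t - 1, by omega⟩
  simp only [Nat.add_sub_cancel]
  nlinarith

lemma max_zero_sub_mul_min_eq {r d n t : ℤ} (ht : t = min n (r + 2)) (hr : 0 ≤ r)
    (hd : r ≤ d) : max 0 (d + 2 - t * (d - r + 1)) = max 0 (d + 2 - n * (d - r + 1)) := by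
  rcases min_cases n (r + 2) with ⟨h, -⟩ | ⟨h, hlt⟩
  · rw [ht, h]
  have hle : (r + 2) * (d - r + 1) ≤ n * (d - r + 1) :=
    mul_le_mul_of_nonneg_right hlt.le (by omega)
  have hpos : 0 ≤ (r + 1) * (d - r) := by positivity
  rw [ht, h, max_eq_left (by nlinarith), max_eq_left (by nlinarith)]

lemma increment_eq {t q a b r d : ℤ} (hE : (t - 1) * q + a = t * (r + 1))
    (ha : 0 ≤ a) (hat : a ≤ t - 2) (hab : a + b = t - 1) (hd : r ≤ d) :
    t * (d + 1 - r) - a * max 0 (d + 1 - q) - b * max 0 (d + 2 - q)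
      = d + 2 - max 0 (d + 2 - t * (d - r + 1)) := by
  rcases lt_trichotomy d (q - 1) with h | rfl | h
  · have hmul : (t - 1) * d ≤ (t - 1) * (q - 2) := by gcongr <;> omega
    rw [max_eq_left (by omega), max_eq_left (by omega), max_eq_right (by nlinarith)]
    ring
  · rw [max_eq_left (by omega), max_eq_right (by omega),
      show q - 1 + 2 - t * (q - 1 - r + 1) = -b by linear_combination -hE + hab,
      max_eq_left (by omega)]
    linear_combination hE - hab
  · have hmul : (t - 1) * q ≤ (t - 1) * d := by gcongr <;> omega
    rw [max_eq_right (by omega), max_eq_right (by omega), max_eq_left (by nlinarith)]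
    linear_combination hE + (q - d - 2) * hab

/-- equivalence of the two forms of the edge-ideal dimension count:
with `t = min(n, r+2)`, `q = ⌊t(r+1)/(t−1)⌋`, `a = t(r+1) − (t−1)q`, `b = t−1−a`,
for `d ≥ r` one has
`t·C(d+1−r,2) − a·C(d+1−q,2) − b·C(d+2−q,2)
  = C(d+2,2) − C(r+2,2) − Σ_{j=1}^{d−r} max(0, r + j + 1 − n·j)`. -/
theorem statement8 (r n d : ℕ) (hn : 2 ≤ n) (hd : r ≤ d)
    (t q a b : ℕ)
    (ht : t = min n (r + 2)) (hq : q = t * (r + 1) / (t - 1))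
    (ha : a = t * (r + 1) - (t - 1) * q) (hb : b = t - 1 - a) :
    (t : ℤ) * choose2 ((d : ℤ) + 1 - r) - (a : ℤ) * choose2 ((d : ℤ) + 1 - q)
        - (b : ℤ) * choose2 ((d : ℤ) + 2 - q)
      = choose2 ((d : ℤ) + 2) - choose2 ((r : ℤ) + 2)
        - ∑ j ∈ Finset.Icc 1 (d - r), max 0 ((r : ℤ) + (j : ℤ) + 1 - (n : ℤ) * (j : ℤ)) := by
  have hqr : r + 2 ≤ q := hq ▸ le_mul_add_one_div_sub_one (by omega) (by omega)
  have hat : a < t - 1 := by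
    rw [ha, hq, ← Nat.mod_eq_sub_mul_div]
    exact Nat.mod_lt _ (by omega)
  have hdiv := Nat.div_add_mod (t * (r + 1)) (t - 1)
  rw [← hq, Nat.mod_eq_sub_mul_div, ← hq, ← ha] at hdiv
  have hE : ((t : ℤ) - 1) * q + a = t * ((r : ℤ) + 1) := by
    rw [← Nat.cast_pred (by omega)]; exact_mod_cast hdiv
  have htz : (t : ℤ) = min (n : ℤ) ((r : ℤ) + 2) := by rw [ht]; push_cast; rfl
  induction d, hd using Nat.le_induction with
  | base =>
    rw [Nat.sub_self, Finset.Icc_eq_empty (by omega), Finset.sum_empty,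
      choose2_of_le_one (by omega), choose2_of_le_one (by omega), choose2_of_le_one (by omega)]
    ring
  | succ d hd ih =>
    have hstep := increment_eq (b := b) hE (by omega) (by omega) (by omega) (Int.ofNat_le.2 hd)
    rw [max_zero_sub_mul_min_eq htz (by omega) (by omega)] at hstep
    rw [show d + 1 - r = d - r + 1 by omega, Finset.sum_Icc_succ_top (by omega)]
    push_cast [Nat.cast_sub hd]
    rw [show (d : ℤ) + 1 + 1 - r = d + 1 - r + 1 by ring,
      show (d : ℤ) + 1 + 1 - q = d + 1 - q + 1 by ring,
      show (d : ℤ) + 1 + 2 - q = d + 2 - q + 1 by ring, show (d : ℤ) + 1 + 2 = d + 2 + 1 by ring,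
      choose2_add_one, choose2_add_one, choose2_add_one, choose2_add_one,
      max_eq_right (by omega : (0 : ℤ) ≤ d + 1 - r), max_eq_right (by omega : (0 : ℤ) ≤ d + 2),
      show (r : ℤ) + (d - r + 1) + 1 - n * (d - r + 1) = d + 2 - n * (d - r + 1) by ring]
    linear_combination ih + hstep
end
end

section
/- Let r ≥ 0 be an integer and K = ⌊(r+1)/3⌋. If g ∈ ℝ[x,y,z] is a nonzero homogeneous polynomial such that g·y^{r+1} belongs to the ideal ⟨x^{r+1}, (x−y)^{r+1}⟩ and g belongs to the ideal ⟨y, z⟩^K, then 2·deg(g) ≥ ⌊(4r+1)/3⌋. -/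
open MvPolynomial

noncomputable section

/-!
Write `g = ∑ z^j g_j` with `g_j ∈ ℝ[x, y]` homogeneous of degree `e - j`, and fix `g_j ≠ 0`.
The hypotheses give `a x^{r+1} + b (x - y)^{r+1} = g_j y^{r+1}` with `a, b` homogeneous of
degree `e - j`, and `y^{K-j} ∣ g_j`. Substituting `x = T, y = T - 1` (so `x - y = 1`), the
polynomial `g_j(T, T - 1) (T - 1)^{r+1}` is nonzero, has at most `2 (e - j + 1)` terms, and has
a root of multiplicity `r + 1 + K - j` at `T = 1`. By Descartes' rule of signs a positive root
has multiplicity less than the number of terms, so `r + K ≤ 2e`, and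
`r + ⌊(r+1)/3⌋ = ⌊(4r+1)/3⌋`.
-/

namespace Polynomial

section LinearOrder

variable {R : Type*} [Semiring R] [LinearOrder R]

theorem length_filter_sign_coeffList {P : R[X]} (hP : P ≠ 0) :
    ((P.coeffList.map SignType.sign).filter (· ≠ 0)).length = P.support.card := by
  simp only [coeffList, List.map_map, List.filter_map, List.length_map,
    ← List.countP_eq_length_filter]
  rw [List.countP_reverse, withBotSucc_degree_eq_natDegree_add_one hP]
  have hsupp : P.support = (Finset.range (P.natDegree + 1)).filter (P.coeff · ≠ 0) := by
    ext i
    simp only [mem_support_iff, Finset.mem_filter, Finset.mem_range, iff_and_self]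
    exact fun hi => Nat.lt_succ_of_le (le_natDegree_of_ne_zero hi)
  rw [hsupp, Finset.card_def, Finset.filter_val, ← Multiset.countP_eq_card_filter,
    Finset.range_val, Multiset.range, Multiset.coe_countP]
  congr 1
  ext i
  simp

theorem signVariations_lt_card_support {P : R[X]} (hP : P ≠ 0) :
    P.signVariations < P.support.card := by
  have hlen := (List.destutter_sublist (· ≠ ·)
    ((P.coeffList.map SignType.sign).filter (· ≠ 0))).length_le
  rw [length_filter_sign_coeffList hP] at hlen
  have hpos : 0 < P.support.card := Finset.card_pos.mpr (nonempty_support_iff.mpr hP)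
  unfold signVariations
  omega

end LinearOrder

theorem lt_card_support_of_X_sub_C_pow_dvd {R : Type*} [CommRing R] [LinearOrder R]
    [IsStrictOrderedRing R] {P : R[X]} {a : R} {N : ℕ} (ha : 0 < a)
    (hP : P ≠ 0) (hdvd : (X - C a) ^ N ∣ P) : N < P.support.card := calc
  N ≤ P.roots.count a := by rwa [count_roots, le_rootMultiplicity_iff hP]
  _ ≤ P.roots.countP (0 < ·) := by
    rw [Multiset.count_eq_card_filter_eq, Multiset.countP_eq_card_filter]
    exact Multiset.card_le_card (Multiset.monotone_filter_right _ fun x hx => hx ▸ ha)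
  _ ≤ P.signVariations := roots_countP_pos_le_signVariations P
  _ < P.support.card := signVariations_lt_card_support hP

theorem card_support_mul_X_pow {R : Type*} [Semiring R] (p : R[X]) (n : ℕ) :
    (p * X ^ n).support.card = p.support.card := by
  have : (p * X ^ n).support = p.support.map (addRightEmbedding n) := by
    ext i
    simp only [mem_support_iff, coeff_mul_X_pow', Finset.mem_map, addRightEmbedding_apply]
    constructor
    · intro h
      split_ifs at h with hi
      · exact ⟨i - n, h, by omega⟩
      · exact absurd rfl h
    · rintro ⟨k, hk, rfl⟩
      simpa using hk
  rw [this, Finset.card_map]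

theorem natDegree_aeval_le_totalDegree {R σ : Type*} [CommSemiring R] {v : σ → R[X]}
    (hv : ∀ i, (v i).natDegree ≤ 1) (q : MvPolynomial σ R) :
    (MvPolynomial.aeval v q).natDegree ≤ q.totalDegree := by
  rw [MvPolynomial.aeval_def, MvPolynomial.eval₂_eq]
  refine natDegree_sum_le_of_forall_le _ _ fun d hd => ?_
  calc (algebraMap R R[X] (q.coeff d) * ∏ i ∈ d.support, v i ^ d i).natDegree
      ≤ ∑ i ∈ d.support, (v i ^ d i).natDegree :=
        (natDegree_C_mul_le _ _).trans (natDegree_prod_le _ _)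
    _ ≤ ∑ i ∈ d.support, d i := Finset.sum_le_sum fun i _ =>
        natDegree_pow_le.trans (by simpa using Nat.mul_le_mul_left (d i) (hv i))
    _ ≤ q.totalDegree := by
        simpa [Finsupp.degree, Finsupp.sum] using MvPolynomial.le_totalDegree hd

theorem pow_sub_dvd_coeff_of_mem_span_C_X_pow {A : Type*} [CommRing A] {y : A} {K : ℕ}
    {p : A[X]} (hp : p ∈ Ideal.span {C y, X} ^ K) (j : ℕ) : y ^ (K - j) ∣ p.coeff j := by
  induction K generalizing p j with
  | zero => simp
  | succ K ih =>
    have hp' : p ∈ Ideal.span {C y} * Ideal.span {C y, X} ^ K ⊔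
        Ideal.span {X} * Ideal.span {C y, X} ^ K := by
      rwa [← Ideal.sup_mul, ← Ideal.span_insert, ← pow_succ']
    obtain ⟨_, hCy, _, hX, rfl⟩ := Submodule.mem_sup.mp hp'
    obtain ⟨u, hu, rfl⟩ := Ideal.mem_span_singleton_mul.mp hCy
    obtain ⟨v, hv, rfl⟩ := Ideal.mem_span_singleton_mul.mp hX
    rw [coeff_add, coeff_C_mul]
    refine dvd_add ?_ ?_
    · calc y ^ (K + 1 - j) ∣ y * y ^ (K - j) := pow_succ' y (K - j) ▸ pow_dvd_pow y (by omega)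
        _ ∣ y * u.coeff j := mul_dvd_mul_left y (ih hu j)
    · cases j with
      | zero => simp
      | succ j => simpa using ih hv j

end Polynomial

namespace MvPolynomial

attribute [local instance] MvPolynomial.gradedAlgebra in
theorem homogeneousComponent_add_mul_of_isHomogeneous {σ R : Type*} [CommSemiring R]
    {b : MvPolynomial σ R} {j : ℕ} (hb : b.IsHomogeneous j) (i : ℕ) (a : MvPolynomial σ R) :
    homogeneousComponent (i + j) (a * b) = homogeneousComponent i a * b := by
  have := DirectSum.coe_decompose_mul_add_of_right_mem (homogeneousSubmodule σ R)
    (i := i) (a := a) hb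
  rwa [← decomposition.decompose'_apply, ← decomposition.decompose'_apply]

theorem exists_isHomogeneous_mul_add_mul_eq {σ R : Type*} [CommSemiring R]
    {f₁ f₂ c h a b : MvPolynomial σ R} {n d : ℕ} (hf₁ : f₁.IsHomogeneous n)
    (hf₂ : f₂.IsHomogeneous n) (hc : c.IsHomogeneous n) (hh : h.IsHomogeneous d)
    (heq : a * f₁ + b * f₂ = h * c) :
    ∃ a' b' : MvPolynomial σ R, a'.IsHomogeneous d ∧ b'.IsHomogeneous d ∧
      a' * f₁ + b' * f₂ = h * c := by
  refine ⟨homogeneousComponent d a, homogeneousComponent d b,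
    homogeneousComponent_isHomogeneous _ _, homogeneousComponent_isHomogeneous _ _, ?_⟩
  have := congrArg (homogeneousComponent (d + n)) heq
  rwa [map_add, homogeneousComponent_add_mul_of_isHomogeneous hf₁,
    homogeneousComponent_add_mul_of_isHomogeneous hf₂,
    homogeneousComponent_add_mul_of_isHomogeneous hc, homogeneousComponent_eq_self hh] at this

theorem IsHomogeneous.eq_zero_of_aeval_X_X_sub_one {R : Type*} [CommRing R]
    {q : MvPolynomial (Fin 2) R} {d : ℕ} (hq : q.IsHomogeneous d)
    (h : MvPolynomial.aeval ![Polynomial.X, (Polynomial.X - 1 : Polynomial R)] q = 0) :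
    q = 0 := by
  -- the involution `τ : (x, y) ↦ (x, x - y)` turns the substitution into dehomogenization
  set τ : MvPolynomial (Fin 2) R →ₐ[R] MvPolynomial (Fin 2) R :=
    MvPolynomial.aeval ![X 0, X 0 - X 1]
  have hττ : τ.comp τ = AlgHom.id R _ := by
    ext i; fin_cases i <;> simp [τ]
  have hτ : (MvPolynomial.aeval ![Polynomial.X, 1]).comp τ =
      MvPolynomial.aeval ![Polynomial.X, (Polynomial.X - 1 : Polynomial R)] := by
    ext i; fin_cases i <;> simp [τ]
  have hτq : (τ q).IsHomogeneous d := by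
    have hlin : ∀ i, (![X 0, X 0 - X 1] i : MvPolynomial (Fin 2) R).IsHomogeneous 1 := by
      intro i; fin_cases i
      exacts [isHomogeneous_X R _, (isHomogeneous_X R _).sub (isHomogeneous_X R _)]
    simpa only [one_mul] using hq.aeval _ hlin
  have hτq0 : τ q = 0 := by
    rw [← Polynomial.homogenize_eq_of_isHomogeneous hτq (p := 0)
      (by rw [← AlgHom.comp_apply, hτ, h]), Polynomial.homogenize_zero]
  rw [← AlgHom.id_apply (R := R) q, ← hττ, AlgHom.comp_apply, hτq0, map_zero]

theorem add_lt_of_mul_X_one_pow_eq {R : Type*} [CommRing R] [LinearOrder R]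
    [IsStrictOrderedRing R] {a b h : MvPolynomial (Fin 2) R} {d n t : ℕ}
    (ha : a.IsHomogeneous d) (hb : b.IsHomogeneous d) (hh : h.IsHomogeneous d) (h0 : h ≠ 0)
    (heq : a * X 0 ^ n + b * (X 0 - X 1) ^ n = h * X 1 ^ n) (hdvd : X 1 ^ t ∣ h) :
    n + t < 2 * d + 2 := by
  set T : Polynomial R := Polynomial.X
  set ψ : MvPolynomial (Fin 2) R →ₐ[R] Polynomial R := aeval ![T, T - Polynomial.C 1]
  have hψ1 : ψ (X 1) = T - Polynomial.C 1 := by simp [ψ]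
  have hψ : ψ a * T ^ n + ψ b = ψ h * (T - Polynomial.C 1) ^ n := by
    simpa [ψ] using congrArg ψ heq
  have hψh : ψ h ≠ 0 := fun h' => h0 (hh.eq_zero_of_aeval_X_X_sub_one (by simpa [ψ] using h'))
  have hψdvd : (T - Polynomial.C 1) ^ (n + t) ∣ ψ h * (T - Polynomial.C 1) ^ n := by
    have := map_dvd ψ hdvd
    rw [map_pow, hψ1] at this
    rw [pow_add, mul_comm (ψ h)]
    exact mul_dvd_mul_left _ this
  have hlin : ∀ i, (![T, T - Polynomial.C 1] i).natDegree ≤ 1 := by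
    intro i; fin_cases i <;> simp [T]; compute_degree!
  have hcard : ∀ q : MvPolynomial (Fin 2) R, q.IsHomogeneous d →
      (ψ q).support.card ≤ d + 1 :=
    fun q hq => (Polynomial.card_supp_le_succ_natDegree _).trans <| Nat.succ_le_succ <|
      (Polynomial.natDegree_aeval_le_totalDegree hlin q).trans hq.totalDegree_le
  calc n + t < (ψ h * (T - Polynomial.C 1) ^ n).support.card :=
        Polynomial.lt_card_support_of_X_sub_C_pow_dvd one_pos
          (mul_ne_zero hψh (pow_ne_zero _ (Polynomial.X_sub_C_ne_zero 1))) hψdvd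
    _ ≤ (ψ a * T ^ n).support.card + (ψ b).support.card := by
        rw [← hψ]
        exact (Finset.card_le_card Polynomial.support_add).trans (Finset.card_union_le _ _)
    _ ≤ 2 * d + 2 := by
        rw [Polynomial.card_support_mul_X_pow]; linarith [hcard a ha, hcard b hb]

end MvPolynomial

def equivPolynomialZ : S3 ≃ₐ[ℝ] Polynomial (MvPolynomial (Fin 2) ℝ) :=
  (renameEquiv ℝ (finRotate 3)).trans (finSuccEquiv ℝ 2)

@[simp]
theorem equivPolynomialZ_X_zero : equivPolynomialZ (X 0) = Polynomial.C (X 0) := by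
  simpa [equivPolynomialZ] using finSuccEquiv_X_succ (R := ℝ) (j := (0 : Fin 2))

@[simp]
theorem equivPolynomialZ_X_one : equivPolynomialZ (X 1) = Polynomial.C (X 1) := by
  simpa [equivPolynomialZ] using finSuccEquiv_X_succ (R := ℝ) (j := (1 : Fin 2))

@[simp]
theorem equivPolynomialZ_X_two : equivPolynomialZ (X 2) = Polynomial.X := by
  simpa [equivPolynomialZ] using finSuccEquiv_X_zero (R := ℝ) (n := 2)

theorem equivPolynomialZ_coeff_isHomogeneous {g : S3} {e j : ℕ} (hg : g.IsHomogeneous e)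
    (hj : (equivPolynomialZ g).coeff j ≠ 0) :
    j ≤ e ∧ ((equivPolynomialZ g).coeff j).IsHomogeneous (e - j) := by
  have hΦg : equivPolynomialZ g = finSuccEquiv ℝ 2 (rename (finRotate 3) g) := by
    rw [equivPolynomialZ, AlgEquiv.trans_apply, renameEquiv_apply]
  rw [hΦg] at hj ⊢
  have hren : (rename (finRotate 3) g).IsHomogeneous e := hg.rename_isHomogeneous
  have hje : j ≤ e := (Nat.le_add_left _ _).trans <|
    (totalDegree_coeff_finSuccEquiv_add_le _ j hj).trans hren.totalDegree_le
  exact ⟨hje, hren.finSuccEquiv_coeff_isHomogeneous j (e - j) (by omega)⟩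

theorem exists_mul_add_mul_eq_equivPolynomialZ_coeff {g : S3} {n : ℕ}
    (hg : g * X 1 ^ n ∈ Ideal.span ({X 0 ^ n, (X 0 - X 1) ^ n} : Set S3)) (j : ℕ) :
    ∃ a b : MvPolynomial (Fin 2) ℝ,
      a * X 0 ^ n + b * (X 0 - X 1) ^ n = (equivPolynomialZ g).coeff j * X 1 ^ n := by
  obtain ⟨a, b, hab⟩ := Ideal.mem_span_pair.mp hg
  refine ⟨(equivPolynomialZ a).coeff j, (equivPolynomialZ b).coeff j, ?_⟩
  have hΦab := congrArg equivPolynomialZ hab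
  simp only [map_add, map_mul, map_pow, map_sub, equivPolynomialZ_X_zero,
    equivPolynomialZ_X_one] at hΦab
  rw [← map_sub, ← map_pow, ← map_pow, ← map_pow] at hΦab
  simpa only [Polynomial.coeff_add, Polynomial.coeff_mul_C] using
    congrArg (Polynomial.coeff · j) hΦab

theorem X_one_pow_sub_dvd_equivPolynomialZ_coeff {g : S3} {K : ℕ}
    (hg : g ∈ Ideal.span ({X 1, X 2} : Set S3) ^ K) (j : ℕ) :
    X 1 ^ (K - j) ∣ (equivPolynomialZ g).coeff j := by
  refine Polynomial.pow_sub_dvd_coeff_of_mem_span_C_X_pow ?_ j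
  simpa [Ideal.map_pow, Ideal.map_span, Set.image_insert_eq] using
    Ideal.mem_map_of_mem equivPolynomialZ hg

/-- degree bound on the smoothing cofactor `g₄₅`: if `g` is a nonzero
homogeneous polynomial with `g·y^{r+1} ∈ ⟨x^{r+1}, (x−y)^{r+1}⟩` and
`g ∈ ⟨y,z⟩^K` where `K = ⌊(r+1)/3⌋`, then `2·deg g ≥ ⌊(4r+1)/3⌋`. -/
theorem statement9 (r K : ℕ) (hKdef : K = (r + 1) / 3) (e : ℕ) (g : S3)
    (hg0 : g ≠ 0) (hge : g.IsHomogeneous e)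
    (hmem : g * MvPolynomial.X 1 ^ (r + 1) ∈
      Ideal.span ({MvPolynomial.X 0 ^ (r + 1),
        (MvPolynomial.X 0 - MvPolynomial.X 1) ^ (r + 1)} : Set S3))
    (hgK : g ∈ (Ideal.span ({MvPolynomial.X 1, MvPolynomial.X 2} : Set S3)) ^ K) :
    (4 * r + 1) / 3 ≤ 2 * e := by
  obtain ⟨j, hj⟩ := Polynomial.nonempty_support_iff.mpr
    ((map_ne_zero_iff _ equivPolynomialZ.injective).mpr hg0)
  have hj0 := Polynomial.mem_support_iff.mp hj
  obtain ⟨hje, hhom⟩ := equivPolynomialZ_coeff_isHomogeneous hge hj0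
  obtain ⟨a, b, hab⟩ := exists_mul_add_mul_eq_equivPolynomialZ_coeff hmem j
  obtain ⟨a', b', ha', hb', heq⟩ := exists_isHomogeneous_mul_add_mul_eq
    ((isHomogeneous_X ℝ 0).pow _) (((isHomogeneous_X ℝ 0).sub (isHomogeneous_X ℝ 1)).pow _)
    ((isHomogeneous_X ℝ 1).pow _) hhom hab
  have := add_lt_of_mul_X_one_pow_eq ha' hb' hhom hj0 heq
    (X_one_pow_sub_dvd_equivPolynomialZ_coeff hgK j)
  omega
end
end
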